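/- Let p be an odd prime, V = (Z/p²Z)², and G̃ ≤ GL₂(Z/p²Z) generated by σ = [[1+p,1],[2p,1+p]] and h = [[1+p,0],[0,1-p]]. Then H¹_loc(G̃, V) ≠ 0. -/

import Mathlib

/-!
Modulo `p²`, every element of `G̃` has the shape `[[1 + p a, b], [2 p b, 1 + p d]]`: this shape is
closed under products because `p² = 0`, and `G̃` is finite. On such matrices
`Z(γ) = (p b² / 2, p b)` is a cocycle. It satisfies the local conditions: if `p ∣ b` then
`Z(γ) = 0`, and otherwise `b` is a unit and `Z(γ) = (γ - 1) v` for an explicit `v`. It is not a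
coboundary: `Z(h) = 0 = (h - 1) v` forces `p v = 0`, and then `(σ - 1) v` has second coordinate
`2 p v₀ + p v₁ = 0 ≠ p = Z(σ)₁`.
-/

open Matrix

section

variable {N : ℕ}

/-- The natural action of `GL₂(ZMod N)` on `(ZMod N)²`. -/
def glAct (γ : GL (Fin 2) (ZMod N)) (v : Fin 2 → ZMod N) : Fin 2 → ZMod N :=
  (γ : Matrix (Fin 2) (Fin 2) (ZMod N)).mulVec v

/-- `Z` is a 1-cocycle on the subgroup `G` with values in `(ZMod N)²`. -/
def IsCocycle (G : Subgroup (GL (Fin 2) (ZMod N))) (Z : G → (Fin 2 → ZMod N)) : Prop :=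
  ∀ a b : G, Z (a * b) = glAct (a : GL (Fin 2) (ZMod N)) (Z b) + Z a

/-- `Z` satisfies the local conditions: each value `Z a` is in the image of `a - Id`. -/
def SatisfiesLocalConditions (G : Subgroup (GL (Fin 2) (ZMod N)))
    (Z : G → (Fin 2 → ZMod N)) : Prop :=
  ∀ a : G, ∃ v : Fin 2 → ZMod N, Z a = glAct (a : GL (Fin 2) (ZMod N)) v - v

/-- `Z` is a 1-coboundary. -/
def IsCoboundary (G : Subgroup (GL (Fin 2) (ZMod N)))
    (Z : G → (Fin 2 → ZMod N)) : Prop :=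
  ∃ v : Fin 2 → ZMod N, ∀ a : G, Z a = glAct (a : GL (Fin 2) (ZMod N)) v - v

end

section TwistedUnipotent

variable {R : Type*} [CommRing R] {ε c : R}

def IsTwistedUnipotent (ε : R) (M : Matrix (Fin 2) (Fin 2) R) : Prop :=
  (∃ a, M 0 0 = 1 + ε * a) ∧ (∃ d, M 1 1 = 1 + ε * d) ∧ M 1 0 = 2 * ε * M 0 1

lemma isTwistedUnipotent_one : IsTwistedUnipotent ε (1 : Matrix (Fin 2) (Fin 2) R) :=
  ⟨⟨0, by simp⟩, ⟨0, by simp⟩, by simp⟩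

lemma IsTwistedUnipotent.mul (hε : ε * ε = 0) {A B : Matrix (Fin 2) (Fin 2) R}
    (hA : IsTwistedUnipotent ε A) (hB : IsTwistedUnipotent ε B) :
    IsTwistedUnipotent ε (A * B) := by
  obtain ⟨⟨a, ha⟩, ⟨d, hd⟩, hA10⟩ := hA
  obtain ⟨⟨a', ha'⟩, ⟨d', hd'⟩, hB10⟩ := hB
  refine ⟨⟨a + a' + 2 * A 0 1 * B 0 1, ?_⟩, ⟨d + d' + 2 * A 0 1 * B 0 1, ?_⟩, ?_⟩ <;>
    simp only [mul_apply, Fin.sum_univ_two, ha, hd, ha', hd', hA10, hB10]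
  · linear_combination (a * a') * hε
  · linear_combination (d * d') * hε
  · linear_combination (2 * A 0 1 * (a' - d') + 2 * (d - a) * B 0 1) * hε

variable (ε) in
def twistedUnipotentSubmonoid (hε : ε * ε = 0) : Submonoid (GL (Fin 2) R) where
  carrier := {γ | IsTwistedUnipotent ε γ}
  mul_mem' hA hB := hA.mul hε hB
  one_mem' := isTwistedUnipotent_one

lemma IsTwistedUnipotent.of_mem_closure [Finite R] (hε : ε * ε = 0) {s : Set (GL (Fin 2) R)}
    (hs : ∀ γ ∈ s, IsTwistedUnipotent ε γ) {γ : GL (Fin 2) R} (hγ : γ ∈ Subgroup.closure s) :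
    IsTwistedUnipotent ε γ := by
  rw [← Subgroup.mem_toSubmonoid, Subgroup.closure_toSubmonoid_of_finite] at hγ
  exact Submonoid.closure_le (S := twistedUnipotentSubmonoid ε hε) |>.mpr hs hγ

variable (ε c) in
def twistedCocycle (M : Matrix (Fin 2) (Fin 2) R) : Fin 2 → R :=
  ![c * ε * M 0 1 ^ 2, ε * M 0 1]

lemma twistedCocycle_mul (hε : ε * ε = 0) (hc : 2 * c = 1) {A B : Matrix (Fin 2) (Fin 2) R}
    (hA : IsTwistedUnipotent ε A) (hB : IsTwistedUnipotent ε B) :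
    twistedCocycle ε c (A * B) = A *ᵥ twistedCocycle ε c B + twistedCocycle ε c A := by
  obtain ⟨⟨a, ha⟩, ⟨d, hd⟩, hA10⟩ := hA
  obtain ⟨-, ⟨d', hd'⟩, -⟩ := hB
  simp only [twistedCocycle, mulVec_fin_two, vec2_add, mul_apply, Fin.sum_univ_two,
    cons_val_zero, cons_val_one, cons_val_fin_one, ha, hd, hd', hA10]
  refine vec2_eq ?_ ?_
  · linear_combination (c * (2 * (A 0 1 + B 0 1) * (a * B 0 1 + A 0 1 * d')
      + ε * (a * B 0 1 + A 0 1 * d') ^ 2) - c * a * B 0 1 ^ 2) * hε + (ε * A 0 1 * B 0 1) * hc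
  · linear_combination ((a * B 0 1 + A 0 1 * d') - 2 * c * A 0 1 * B 0 1 ^ 2 - d * B 0 1) * hε

lemma twistedCocycle_eq_mulVec_sub_of_isUnit (hε : ε * ε = 0) (hc : 2 * c = 1)
    {M : Matrix (Fin 2) (Fin 2) R} (hM : IsTwistedUnipotent ε M) (hb : IsUnit (M 0 1)) :
    ∃ v, twistedCocycle ε c M = M *ᵥ v - v := by
  obtain ⟨⟨a, ha⟩, ⟨d, hd⟩, hM10⟩ := hM
  obtain ⟨t, ht⟩ := hb.exists_right_inv
  refine ⟨![c, t * c * ε * (M 0 1 ^ 2 - a)], ?_⟩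
  simp only [twistedCocycle, mulVec_fin_two, cons_sub_cons, empty_sub_empty, cons_val_zero,
    cons_val_one, cons_val_fin_one, ha, hd, hM10]
  refine vec2_eq ?_ ?_
  · linear_combination (-(c * ε * (M 0 1 ^ 2 - a))) * ht
  · linear_combination (-(c * d * t * (M 0 1 ^ 2 - a))) * hε - (ε * M 0 1) * hc

lemma twistedCocycle_eq_zero {M : Matrix (Fin 2) (Fin 2) R} (h : ε * M 0 1 = 0) :
    twistedCocycle ε c M = 0 := by
  have h0 : c * ε * M 0 1 ^ 2 = 0 := by linear_combination (c * M 0 1) * h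
  simp [twistedCocycle, h0, h]

lemma eq_zero_of_twistedCocycle_eq_mulVec_sub {v : Fin 2 → R}
    (hσ : twistedCocycle ε c !![1 + ε, 1; 2 * ε, 1 + ε] = !![1 + ε, 1; 2 * ε, 1 + ε] *ᵥ v - v)
    (hh : twistedCocycle ε c !![1 + ε, 0; 0, 1 - ε] = !![1 + ε, 0; 0, 1 - ε] *ᵥ v - v) :
    ε = 0 := by
  have hσ1 := congrFun hσ 1
  have hh0 := congrFun hh 0
  have hh1 := congrFun hh 1
  simp only [twistedCocycle, mulVec_fin_two, Pi.sub_apply, of_apply, cons_val_zero, cons_val_one,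
    cons_val_fin_one] at hσ1 hh0 hh1
  linear_combination hσ1 - 2 * hh0 + hh1

end TwistedUnipotent

namespace ZMod

lemma natCast_mul_self_eq_zero_of_sq (p : ℕ) : (p : ZMod (p ^ 2)) * p = 0 := by
  rw [← Nat.cast_mul, ← sq, natCast_self]

lemma natCast_ne_zero_of_sq {p : ℕ} (hp : 1 < p) : (p : ZMod (p ^ 2)) ≠ 0 := by
  rw [Ne, natCast_eq_zero_iff]
  intro hdvd
  have := Nat.le_of_dvd (by omega) hdvd
  nlinarith

lemma isUnit_or_natCast_mul_eq_zero_of_sq {p : ℕ} (hp : p.Prime) (b : ZMod (p ^ 2)) :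
    IsUnit b ∨ p * b = 0 := by
  have : NeZero p := ⟨hp.ne_zero⟩
  rw [← natCast_zmod_val b]
  by_cases hdvd : p ∣ b.val
  · obtain ⟨k, hk⟩ := hdvd
    right
    rw [hk, Nat.cast_mul, ← mul_assoc, natCast_mul_self_eq_zero_of_sq, zero_mul]
  · left
    rw [isUnit_iff_coprime]
    exact ((hp.coprime_iff_not_dvd.mpr hdvd).pow_left 2).symm

lemma exists_two_mul_eq_one {n : ℕ} (hn : Odd n) : ∃ c : ZMod n, 2 * c = 1 :=
  ((isUnit_iff_coprime 2 n).mpr (Nat.coprime_two_left.mpr hn)).exists_right_inv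

end ZMod

/-- Let `p` be an odd prime and `G̃ ≤ GL₂(ZMod p²)` generated by
`σ = [[1+p,1],[2p,1+p]]` and `h = [[1+p,0],[0,1-p]]`. Then
`H¹_loc(G̃, (ZMod p²)²) ≠ 0`: there is a cocycle satisfying the local
conditions which is not a coboundary. -/
theorem h1loc_nonzero_index_two_case
    (p : ℕ) (hp : p.Prime) (hodd : Odd p)
    (σ h : GL (Fin 2) (ZMod (p ^ 2)))
    (hσ : (σ : Matrix (Fin 2) (Fin 2) (ZMod (p ^ 2))) =
      !![1 + (p : ZMod (p ^ 2)), 1; 2 * (p : ZMod (p ^ 2)), 1 + (p : ZMod (p ^ 2))])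
    (hh : (h : Matrix (Fin 2) (Fin 2) (ZMod (p ^ 2))) =
      !![1 + (p : ZMod (p ^ 2)), 0; 0, 1 - (p : ZMod (p ^ 2))]) :
    ∃ Z : (Subgroup.closure ({σ, h} : Set (GL (Fin 2) (ZMod (p ^ 2))))) →
        (Fin 2 → ZMod (p ^ 2)),
      IsCocycle _ Z ∧ SatisfiesLocalConditions _ Z ∧ ¬ IsCoboundary _ Z := by
  have : NeZero p := ⟨hp.ne_zero⟩
  have hε := ZMod.natCast_mul_self_eq_zero_of_sq p
  obtain ⟨c, hc⟩ := ZMod.exists_two_mul_eq_one hodd.pow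
  have hgen : ∀ γ ∈ ({σ, h} : Set (GL (Fin 2) (ZMod (p ^ 2)))),
      IsTwistedUnipotent (p : ZMod (p ^ 2)) γ := by
    rintro γ (rfl | rfl)
    · exact ⟨⟨1, by simp [hσ]⟩, ⟨1, by simp [hσ]⟩, by simp [hσ]⟩
    · exact ⟨⟨1, by simp [hh]⟩, ⟨-1, by simp [hh, sub_eq_add_neg]⟩, by simp [hh]⟩
  have hG (γ : Subgroup.closure ({σ, h} : Set (GL (Fin 2) (ZMod (p ^ 2))))) :
      IsTwistedUnipotent (p : ZMod (p ^ 2)) (γ : GL (Fin 2) (ZMod (p ^ 2))) :=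
    .of_mem_closure hε hgen γ.2
  refine ⟨fun γ ↦ twistedCocycle (p : ZMod (p ^ 2)) c (γ : GL (Fin 2) (ZMod (p ^ 2))),
    fun a b ↦ twistedCocycle_mul hε hc (hG a) (hG b), fun a ↦ ?_, ?_⟩
  · rcases ZMod.isUnit_or_natCast_mul_eq_zero_of_sq hp
        (((a : GL (Fin 2) (ZMod (p ^ 2))) : Matrix (Fin 2) (Fin 2) (ZMod (p ^ 2))) 0 1)
      with hb | hb
    · exact twistedCocycle_eq_mulVec_sub_of_isUnit hε hc (hG a) hb
    · exact ⟨0, by simp [twistedCocycle_eq_zero hb, glAct]⟩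
  · rintro ⟨v, hv⟩
    refine ZMod.natCast_ne_zero_of_sq hp.one_lt
      (eq_zero_of_twistedCocycle_eq_mulVec_sub (c := c) (v := v) ?_ ?_)
    · simpa only [glAct, hσ] using hv ⟨σ, Subgroup.subset_closure (by simp)⟩
    · simpa only [glAct, hh] using hv ⟨h, Subgroup.subset_closure (by simp)⟩
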